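/- arXiv:2108.11890 — 2 statements merged into one kernel-verified Lean document; each statement's English description precedes it below -/
import Mathlib

section
/- Fix 2 ≤ k ≤ n and let (M_t)_{t≥0} be the k-PM random walk on M_n started at id_n. Let C_t := C(M_t) be the induced cycle-structure chain, π_M the uniform distribution on M_n, and π_C the pushforward of π_M under the map η ↦ C(η). Then for every t ≥ 0, TV(law(M_t), π_M) = TV(law(C_t), π_C). -/
open scoped Classical

noncomputable section

/-- A perfect matching on `2n` objects, encoded as a fixed-point-free involution of
`Fin n × Bool`; the element `(i, b)` encodes the object `2i+1` (if `b = false`)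
or `2i+2` (if `b = true`) of `{1, …, 2n}`. The pairs of the matching are the orbits. -/
abbrev PM (n : ℕ) : Type :=
  {σ : Equiv.Perm (Fin n × Bool) // Function.Involutive ⇑σ ∧ ∀ x, σ x ≠ x}

/-- The identity matching `id_n = {{1,2},…,{2n-1,2n}}`. -/
def idPM (n : ℕ) : PM n :=
  ⟨⟨fun x => (x.1, !x.2), fun x => (x.1, !x.2), fun x => by simp, fun x => by simp⟩,
    fun x => by simp, fun x => by simp [Prod.ext_iff]⟩

/-- The (simple graph underlying the) multigraph with edge multiset `η ⊎ μ`. -/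
def matchGraph {n : ℕ} (η μ : PM n) : SimpleGraph (Fin n × Bool) where
  Adj x y := x ≠ y ∧ (η.1 x = y ∨ μ.1 x = y)
  symm := ⟨by
    rintro x y ⟨hne, h | h⟩
    · exact ⟨hne.symm, Or.inl (by rw [← h]; exact η.2.1 x)⟩
    · exact ⟨hne.symm, Or.inr (by rw [← h]; exact μ.2.1 x)⟩⟩
  loopless := ⟨by rintro x ⟨hne, -⟩; exact hne rfl⟩

/-- `cycleCount η μ ℓ` is the number of connected components of size `2ℓ`
of the multigraph `η ⊎ μ`; `cycleCount η (idPM n)` is the cycle structure `C(η)`. -/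
def cycleCount {n : ℕ} (η μ : PM n) (ℓ : ℕ) : ℕ :=
  Nat.card {c : (matchGraph η μ).ConnectedComponent // Nat.card c.supp = 2 * ℓ}

/-- Total variation distance, `max_A |μ(A) - ν(A)|`. -/
def TV {Ω : Type*} (μ ν : Ω → ℝ) : ℝ :=
  ⨆ A : Finset Ω, |∑ x ∈ A, μ x - ∑ x ∈ A, ν x|

/-- Pushforward of a (finitely supported) distribution along a map. -/
def push {Ω : Type*} [Fintype Ω] {S : Type*} (f : Ω → S) (μ : Ω → ℝ) : S → ℝ :=
  fun s => ∑ x ∈ Finset.univ.filter (fun x => f x = s), μ x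

/-- The `η`-invariant subsets of size `2k`, i.e. the unions of `k` pairs of `η`. -/
def invSets {n : ℕ} (η : PM n) (k : ℕ) : Finset (Finset (Fin n × Bool)) :=
  Finset.univ.filter fun T => T.card = 2 * k ∧ ∀ x ∈ T, η.1 x ∈ T

/-- `Compat η T η'` : the matching `η'` agrees with `η` outside `T` and matches
the elements of `T` among themselves. -/
def Compat {n : ℕ} (η : PM n) (T : Finset (Fin n × Bool)) (η' : PM n) : Prop :=
  (∀ x, x ∉ T → η'.1 x = η.1 x) ∧ ∀ x ∈ T, η'.1 x ∈ T

/-- One-step transition kernel of the `k`-PM random walk: choose `k` pairs of `η`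
uniformly (i.e. an `η`-invariant set `T` of size `2k`) and rematch the `2k` covered
elements by an independent uniform perfect matching of them. -/
def kernel (n k : ℕ) (η η' : PM n) : ℝ :=
  (∑ T ∈ invSets η k,
      if Compat η T η' then ((Finset.univ.filter fun η'' : PM n => Compat η T η'').card : ℝ)⁻¹
      else 0) / ((invSets η k).card : ℝ)

/-- Law at time `t` of the `k`-PM random walk started at `η₀`. -/
def pmLaw (n k : ℕ) (η₀ : PM n) : ℕ → PM n → ℝ
  | 0 => fun η => if η = η₀ then 1 else 0
  | t + 1 => fun η => ∑ η' : PM n, pmLaw n k η₀ t η' * kernel n k η' η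

/-- The uniform distribution on `PM n`. -/
def unifPM (n : ℕ) : PM n → ℝ := fun _ => (Fintype.card (PM n) : ℝ)⁻¹

/-- `d_n(t)`: worst-case (over the starting matching) total variation distance to
uniformity at time `t` for the `k`-PM random walk. -/
def dTV (n k t : ℕ) : ℝ := ⨆ η₀ : PM n, TV (pmLaw n k η₀ t) (unifPM n)

/-- The swap graph: two matchings are adjacent if one is obtained from the other by
a single swap (rematching two of its pairs differently). -/
def swapGraph (n : ℕ) : SimpleGraph (PM n) where
  Adj η η' := η ≠ η' ∧ ∃ T : Finset (Fin n × Bool), T.card = 4 ∧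
    (∀ x ∈ T, η.1 x ∈ T) ∧ (∀ x ∈ T, η'.1 x ∈ T) ∧ ∀ x, x ∉ T → η.1 x = η'.1 x
  symm := ⟨by
    rintro η η' ⟨hne, T, hT, h1, h2, h3⟩
    exact ⟨hne.symm, T, hT, h2, h1, fun x hx => (h3 x hx).symm⟩⟩
  loopless := ⟨fun η h => h.1 rfl⟩


/-- The cycle structure `C(η) = (C_1(η), C_2(η), …)` of a matching, as a function
`ℕ → ℕ` (the value at `0` is irrelevant and equal to `0`). -/
def cycleStruct {n : ℕ} (η : PM n) : ℕ → ℕ := fun ℓ => cycleCount η (idPM n) ℓ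

section TVlemmas

variable {Ω : Type*} [Fintype Ω] (μ ν : Ω → ℝ)

private def Ppart : ℝ := ∑ x : Ω, max (μ x - ν x) 0
private def Npart : ℝ := ∑ x : Ω, max (ν x - μ x) 0

lemma abs_sum_le_maxPN (A : Finset Ω) :
    |∑ x ∈ A, μ x - ∑ x ∈ A, ν x| ≤ max (Ppart μ ν) (Npart μ ν) := by
  rw [← Finset.sum_sub_distrib, abs_le]
  constructor
  · rw [neg_le, ← Finset.sum_neg_distrib]
    calc ∑ x ∈ A, -(μ x - ν x) ≤ ∑ x ∈ A, max (ν x - μ x) 0 := by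
          apply Finset.sum_le_sum; intro i _; rw [neg_sub]; exact le_max_left _ _
    _ ≤ Npart μ ν := by
          apply Finset.sum_le_sum_of_subset_of_nonneg (Finset.subset_univ A)
          intro i _ _; exact le_max_right _ _
    _ ≤ max (Ppart μ ν) (Npart μ ν) := le_max_right _ _
  · calc ∑ x ∈ A, (μ x - ν x) ≤ ∑ x ∈ A, max (μ x - ν x) 0 := by
          apply Finset.sum_le_sum; intro i _; exact le_max_left _ _
    _ ≤ Ppart μ ν := by
          apply Finset.sum_le_sum_of_subset_of_nonneg (Finset.subset_univ A)
          intro i _ _; exact le_max_right _ _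
    _ ≤ max (Ppart μ ν) (Npart μ ν) := le_max_left _ _

lemma sum_filter_pos_eq_Ppart :
    ∑ x ∈ Finset.univ.filter (fun x => 0 < μ x - ν x), (μ x - ν x) = Ppart μ ν := by
  rw [Ppart, ← Finset.sum_filter_add_sum_filter_not Finset.univ (fun x => 0 < μ x - ν x)]
  have h1 : ∑ x ∈ Finset.univ.filter (fun x => 0 < μ x - ν x), max (μ x - ν x) 0
      = ∑ x ∈ Finset.univ.filter (fun x => 0 < μ x - ν x), (μ x - ν x) := by
    apply Finset.sum_congr rfl; intro x hx
    simp only [Finset.mem_filter] at hx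
    exact max_eq_left hx.2.le
  have h2 : ∑ x ∈ Finset.univ.filter (fun x => ¬ 0 < μ x - ν x), max (μ x - ν x) 0 = 0 := by
    apply Finset.sum_eq_zero; intro x hx
    simp only [Finset.mem_filter, not_lt] at hx
    exact max_eq_right hx.2
  rw [h1, h2, add_zero]

lemma Ppart_nonneg : 0 ≤ Ppart μ ν :=
  Finset.sum_nonneg fun _ _ => le_max_right _ _

lemma TV_eq_maxPN : TV μ ν = max (Ppart μ ν) (Npart μ ν) := by
  apply le_antisymm
  · exact Real.iSup_le (fun A => abs_sum_le_maxPN μ ν A)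
      (le_trans (Ppart_nonneg μ ν) (le_max_left _ _))
  · have hbdd : BddAbove (Set.range fun A : Finset Ω => |∑ x ∈ A, μ x - ∑ x ∈ A, ν x|) :=
      ⟨max (Ppart μ ν) (Npart μ ν), by rintro r ⟨A, rfl⟩; exact abs_sum_le_maxPN μ ν A⟩
    rw [max_le_iff]
    constructor
    · calc Ppart μ ν = |∑ x ∈ Finset.univ.filter (fun x => 0 < μ x - ν x), μ x
            - ∑ x ∈ Finset.univ.filter (fun x => 0 < μ x - ν x), ν x| := by
            rw [← Finset.sum_sub_distrib, sum_filter_pos_eq_Ppart μ ν,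
              abs_of_nonneg (Ppart_nonneg μ ν)]
      _ ≤ TV μ ν := le_ciSup hbdd _
    · calc Npart μ ν = |∑ x ∈ Finset.univ.filter (fun x => 0 < ν x - μ x), μ x
            - ∑ x ∈ Finset.univ.filter (fun x => 0 < ν x - μ x), ν x| := by
            rw [← Finset.sum_sub_distrib]
            have : ∑ x ∈ Finset.univ.filter (fun x => 0 < ν x - μ x), (μ x - ν x)
                = -(Npart μ ν) := by
              have hnp : Npart μ ν = Ppart ν μ := rfl
              rw [hnp, ← sum_filter_pos_eq_Ppart ν μ, ← Finset.sum_neg_distrib]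
              apply Finset.sum_congr rfl; intro x _; ring
            rw [this, abs_neg]
            exact (abs_of_nonneg (Ppart_nonneg ν μ)).symm
      _ ≤ TV μ ν := le_ciSup hbdd _

variable {S : Type*} (f : Ω → S)

lemma sum_push (A : Finset S) :
    ∑ s ∈ A, push f μ s = ∑ x ∈ Finset.univ.filter (fun x => f x ∈ A), μ x :=
  Finset.sum_fiberwise_eq_sum_filter _ _ _ _

lemma TV_push_eq (hconst : ∀ x y, f x = f y → μ x - ν x = μ y - ν y) :
    TV (push f μ) (push f ν) = TV μ ν := by
  have key : ∀ A : Finset S, |∑ s ∈ A, push f μ s - ∑ s ∈ A, push f ν s|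
      = |∑ x ∈ Finset.univ.filter (fun x => f x ∈ A), μ x
        - ∑ x ∈ Finset.univ.filter (fun x => f x ∈ A), ν x| := by
    intro A; rw [sum_push, sum_push]
  have hbd : ∀ A : Finset S, |∑ s ∈ A, push f μ s - ∑ s ∈ A, push f ν s|
      ≤ max (Ppart μ ν) (Npart μ ν) := by
    intro A; rw [key]; exact abs_sum_le_maxPN μ ν _
  have hbdd : BddAbove (Set.range fun A : Finset S =>
      |∑ s ∈ A, push f μ s - ∑ s ∈ A, push f ν s|) :=
    ⟨max (Ppart μ ν) (Npart μ ν), by rintro r ⟨A, rfl⟩; exact hbd A⟩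
  rw [TV_eq_maxPN μ ν]
  apply le_antisymm
  · exact Real.iSup_le hbd (le_trans (Ppart_nonneg μ ν) (le_max_left _ _))
  · rw [max_le_iff]
    have himg : ∀ (ρ σ : Ω → ℝ), (∀ x y, f x = f y → ρ x - σ x = ρ y - σ y) →
        Ppart ρ σ ≤ ⨆ A : Finset S, |∑ s ∈ A, push f μ s - ∑ s ∈ A, push f ν s| → True := by
      intro _ _ _ _; trivial
    constructor
    · -- use A = image of positive set
      set A := (Finset.univ.filter (fun x => 0 < μ x - ν x)).image f with hA
      have hfil : Finset.univ.filter (fun x => f x ∈ A)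
          = Finset.univ.filter (fun x => 0 < μ x - ν x) := by
        apply Finset.filter_congr
        intro x _
        simp only [hA, Finset.mem_image, Finset.mem_filter, Finset.mem_univ, true_and]
        constructor
        · rintro ⟨y, hy, hxy⟩; rw [hconst x y hxy.symm]; exact hy
        · intro hx; exact ⟨x, hx, rfl⟩
      calc Ppart μ ν = |∑ s ∈ A, push f μ s - ∑ s ∈ A, push f ν s| := by
            rw [key, hfil, ← Finset.sum_sub_distrib, sum_filter_pos_eq_Ppart μ ν,
              abs_of_nonneg (Ppart_nonneg μ ν)]
      _ ≤ _ := le_ciSup hbdd _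
    · set A := (Finset.univ.filter (fun x => 0 < ν x - μ x)).image f with hA
      have hfil : Finset.univ.filter (fun x => f x ∈ A)
          = Finset.univ.filter (fun x => 0 < ν x - μ x) := by
        apply Finset.filter_congr
        intro x _
        simp only [hA, Finset.mem_image, Finset.mem_filter, Finset.mem_univ, true_and]
        constructor
        · rintro ⟨y, hy, hxy⟩
          have := hconst x y hxy.symm
          have : ν x - μ x = ν y - μ y := by linarith
          rw [this]; exact hy
        · intro hx; exact ⟨x, hx, rfl⟩
      calc Npart μ ν = |∑ s ∈ A, push f μ s - ∑ s ∈ A, push f ν s| := by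
            rw [key, hfil, ← Finset.sum_sub_distrib]
            have : ∑ x ∈ Finset.univ.filter (fun x => 0 < ν x - μ x), (μ x - ν x)
                = -(Npart μ ν) := by
              have hnp : Npart μ ν = Ppart ν μ := rfl
              rw [hnp, ← sum_filter_pos_eq_Ppart ν μ, ← Finset.sum_neg_distrib]
              apply Finset.sum_congr rfl; intro x _; ring
            rw [this, abs_neg]
            exact (abs_of_nonneg (Ppart_nonneg ν μ)).symm
      _ ≤ _ := le_ciSup hbdd _

end TVlemmas

theorem Equiv.Perm.inv_apply_self {α : Type*} (f : Equiv.Perm α) (x : α) : f⁻¹ (f x) = x :=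
  f.symm_apply_apply x

theorem Equiv.Perm.apply_inv_self {α : Type*} (f : Equiv.Perm α) (x : α) : f (f⁻¹ x) = x :=
  f.apply_symm_apply x

section Conj

variable {n : ℕ}

/-- Conjugation of a matching by a permutation of the ground set. -/
def conjPM (g : Equiv.Perm (Fin n × Bool)) (η : PM n) : PM n :=
  ⟨g * η.1 * g⁻¹,
   fun x => by
     simp only [Equiv.Perm.mul_apply, Equiv.Perm.inv_apply_self]
     rw [η.2.1 _, Equiv.Perm.apply_inv_self],
   fun x hx => by
     simp only [Equiv.Perm.mul_apply] at hx
     exact η.2.2 (g⁻¹ x) (by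
       have := congrArg (⇑g⁻¹) hx
       simpa using this)⟩

lemma conjPM_apply (g : Equiv.Perm (Fin n × Bool)) (η : PM n) (x : Fin n × Bool) :
    (conjPM g η).1 x = g (η.1 (g⁻¹ x)) := rfl

lemma conjPM_conjPM (g h : Equiv.Perm (Fin n × Bool)) (η : PM n) :
    conjPM g (conjPM h η) = conjPM (g * h) η := by
  apply Subtype.ext
  simp only [conjPM, mul_inv_rev]
  group

lemma conjPM_one (η : PM n) : conjPM 1 η = η := by
  apply Subtype.ext; simp [conjPM]

lemma conjPM_inv_conjPM (g : Equiv.Perm (Fin n × Bool)) (η : PM n) :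
    conjPM g⁻¹ (conjPM g η) = η := by
  rw [conjPM_conjPM, inv_mul_cancel, conjPM_one]

lemma conjPM_injective (g : Equiv.Perm (Fin n × Bool)) :
    Function.Injective (conjPM (n := n) g) := by
  intro a b hab
  have := congrArg (conjPM g⁻¹) hab
  rwa [conjPM_inv_conjPM, conjPM_inv_conjPM] at this

/-- Conjugation as an equivalence of `PM n`. -/
def conjEquiv (g : Equiv.Perm (Fin n × Bool)) : PM n ≃ PM n where
  toFun := conjPM g
  invFun := conjPM g⁻¹
  left_inv := conjPM_inv_conjPM g
  right_inv := fun η => by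
    have := conjPM_inv_conjPM g⁻¹ η
    rwa [inv_inv] at this

lemma mem_invSets_conj (g : Equiv.Perm (Fin n × Bool)) (η : PM n) (k : ℕ)
    (T : Finset (Fin n × Bool)) (hT : T ∈ invSets η k) :
    T.image g ∈ invSets (conjPM g η) k := by
  simp only [invSets, Finset.mem_filter, Finset.mem_univ, true_and] at hT ⊢
  refine ⟨by rw [Finset.card_image_of_injective _ g.injective, hT.1], ?_⟩
  intro x hx
  rcases Finset.mem_image.mp hx with ⟨y, hy, rfl⟩
  rw [conjPM_apply]
  simp only [Equiv.Perm.inv_apply_self]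
  exact Finset.mem_image_of_mem _ (hT.2 y hy)

lemma invSets_conj (g : Equiv.Perm (Fin n × Bool)) (η : PM n) (k : ℕ) :
    invSets (conjPM g η) k = (invSets η k).image (fun T => T.image g) := by
  ext T
  constructor
  · intro hT
    refine Finset.mem_image.mpr ⟨T.image ⇑g⁻¹, ?_, ?_⟩
    · have := mem_invSets_conj g⁻¹ (conjPM g η) k T hT
      rwa [conjPM_inv_conjPM] at this
    · rw [Finset.image_image]
      have : (⇑g ∘ ⇑g⁻¹) = id := by
        funext x; simp
      rw [this, Finset.image_id]
  · intro hT
    rcases Finset.mem_image.mp hT with ⟨S, hS, rfl⟩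
    exact mem_invSets_conj g η k S hS

lemma Compat.conj {g : Equiv.Perm (Fin n × Bool)} {η : PM n} {T : Finset (Fin n × Bool)}
    {η' : PM n} (h : Compat η T η') :
    Compat (conjPM g η) (T.image g) (conjPM g η') := by
  constructor
  · intro x hx
    rw [conjPM_apply, conjPM_apply]
    congr 1
    apply h.1
    intro hmem
    exact hx (by
      have := Finset.mem_image_of_mem (⇑g) hmem
      rwa [Equiv.Perm.apply_inv_self] at this)
  · intro x hx
    rcases Finset.mem_image.mp hx with ⟨y, hy, rfl⟩
    rw [conjPM_apply]
    simp only [Equiv.Perm.inv_apply_self]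
    exact Finset.mem_image_of_mem _ (h.2 y hy)

lemma compat_conj_iff (g : Equiv.Perm (Fin n × Bool)) (η : PM n) (T : Finset (Fin n × Bool))
    (η' : PM n) :
    Compat (conjPM g η) (T.image g) (conjPM g η') ↔ Compat η T η' := by
  constructor
  · intro h
    have h2 := h.conj (g := g⁻¹)
    rw [conjPM_inv_conjPM, conjPM_inv_conjPM, Finset.image_image] at h2
    have : (⇑g⁻¹ ∘ ⇑g) = id := by funext x; simp
    rwa [this, Finset.image_id] at h2
  · exact Compat.conj

lemma card_compat_conj (g : Equiv.Perm (Fin n × Bool)) (η : PM n)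
    (T : Finset (Fin n × Bool)) :
    (Finset.univ.filter fun η'' : PM n => Compat (conjPM g η) (T.image g) η'').card
      = (Finset.univ.filter fun η'' : PM n => Compat η T η'').card := by
  apply Finset.card_bij' (fun η'' _ => conjPM g⁻¹ η'') (fun η'' _ => conjPM g η'')
  · intro a ha
    simp only [Finset.mem_filter, Finset.mem_univ, true_and] at ha ⊢
    have : a = conjPM g (conjPM g⁻¹ a) := by
      rw [conjPM_conjPM, mul_inv_cancel, conjPM_one]
    rw [this] at ha
    exact (compat_conj_iff g η T _).mp ha
  · intro a ha
    simp only [Finset.mem_filter, Finset.mem_univ, true_and] at ha ⊢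
    exact (compat_conj_iff g η T _).mpr ha
  · intro a _
    rw [conjPM_conjPM, mul_inv_cancel, conjPM_one]
  · intro a _
    rw [conjPM_conjPM, inv_mul_cancel, conjPM_one]

lemma kernel_conj (g : Equiv.Perm (Fin n × Bool)) (k : ℕ) (η η' : PM n) :
    kernel n k (conjPM g η) (conjPM g η') = kernel n k η η' := by
  unfold kernel
  rw [invSets_conj]
  have himg : Finset.card ((invSets η k).image (fun T => T.image g))
      = (invSets η k).card := by
    apply Finset.card_image_of_injective
    exact fun S T h => Finset.image_injective g.injective h
  rw [himg]
  congr 1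
  rw [Finset.sum_image (fun S _ T _ h => Finset.image_injective g.injective h)]
  apply Finset.sum_congr rfl
  intro T _
  rw [card_compat_conj g η T]
  by_cases h : Compat η T η'
  · rw [if_pos h, if_pos ((compat_conj_iff g η T η').mpr h)]
  · rw [if_neg h, if_neg (fun hc => h ((compat_conj_iff g η T η').mp hc))]

lemma pmLaw_conj (g : Equiv.Perm (Fin n × Bool)) (k : ℕ) (η₀ : PM n) (t : ℕ) (η : PM n) :
    pmLaw n k (conjPM g η₀) t (conjPM g η) = pmLaw n k η₀ t η := by
  induction t generalizing η with
  | zero =>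
    simp only [pmLaw]
    by_cases h : η = η₀
    · rw [if_pos h, if_pos (by rw [h])]
    · rw [if_neg h, if_neg (fun hc => h (conjPM_injective g hc))]
  | succ t ih =>
    simp only [pmLaw]
    rw [← Equiv.sum_comp (conjEquiv g) (fun η' => pmLaw n k (conjPM g η₀) t η' *
      kernel n k η' (conjPM g η))]
    apply Finset.sum_congr rfl
    intro η' _
    show pmLaw n k (conjPM g η₀) t (conjPM g η') * kernel n k (conjPM g η') (conjPM g η) = _
    rw [ih, kernel_conj]

lemma conjPM_idPM (g : Equiv.Perm (Fin n × Bool))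
    (hg : ∀ x, g ((idPM n).1 x) = (idPM n).1 (g x)) :
    conjPM g (idPM n) = idPM n := by
  apply Subtype.ext
  apply Equiv.ext
  intro x
  rw [conjPM_apply] at *
  rw [hg (g⁻¹ x), Equiv.Perm.apply_inv_self]

end Conj

section Dyn

variable {n : ℕ}

lemma PM.inv_eq (η : PM n) : η.1⁻¹ = η.1 := by
  apply Equiv.ext
  intro x
  rw [Equiv.Perm.inv_eq_iff_eq]
  exact (η.2.1 x).symm

lemma PM.mul_self (η : PM n) : η.1 * η.1 = 1 := by
  calc η.1 * η.1 = η.1 * η.1⁻¹ := by rw [PM.inv_eq]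
  _ = 1 := mul_inv_cancel _

def pperm (η : PM n) : Equiv.Perm (Fin n × Bool) := η.1 * (idPM n).1

lemma pperm_apply (η : PM n) (x : Fin n × Bool) :
    pperm η x = η.1 ((idPM n).1 x) := rfl

lemma pperm_inv_apply (η : PM n) (x : Fin n × Bool) :
    (pperm η)⁻¹ x = (idPM n).1 (η.1 x) := by
  rw [pperm, mul_inv_rev, PM.inv_eq, PM.inv_eq]
  rfl

lemma pperm_mul_iota (η : PM n) : pperm η * (idPM n).1 = η.1 := by
  rw [pperm, mul_assoc, PM.mul_self, mul_one]

lemma eta_apply (η : PM n) (x : Fin n × Bool) :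
    η.1 x = pperm η ((idPM n).1 x) := by
  conv_lhs => rw [← pperm_mul_iota η]
  rfl

lemma iota_mul_pperm_zpow (η : PM n) (i : ℤ) :
    (idPM n).1 * (pperm η) ^ i = (pperm η) ^ (-i) * (idPM n).1 := by
  have base : (idPM n).1 * pperm η * ((idPM n).1)⁻¹ = (pperm η)⁻¹ := by
    rw [pperm, mul_inv_rev, PM.inv_eq η, PM.inv_eq (idPM n), mul_assoc, mul_assoc,
      PM.mul_self (idPM n), mul_one]
  have h := map_zpow (MulAut.conj ((idPM n).1)) (pperm η) i
  simp only [MulAut.conj_apply] at h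
  rw [base] at h
  rw [PM.inv_eq (idPM n), inv_zpow'] at h
  calc (idPM n).1 * pperm η ^ i
      = (idPM n).1 * pperm η ^ i * (idPM n).1 * (idPM n).1 := by
        rw [mul_assoc ((idPM n).1 * pperm η ^ i), PM.mul_self (idPM n), mul_one]
  _ = pperm η ^ (-i) * (idPM n).1 := by rw [h]

lemma iota_pperm_zpow_apply (η : PM n) (i : ℤ) (x : Fin n × Bool) :
    (idPM n).1 ((pperm η ^ i) x) = (pperm η ^ (-i)) ((idPM n).1 x) := by
  show ((idPM n).1 * pperm η ^ i) x = (pperm η ^ (-i) * (idPM n).1) x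
  rw [iota_mul_pperm_zpow]

lemma zpow_apply_add (η : PM n) (i j : ℤ) (x : Fin n × Bool) :
    (pperm η ^ i) ((pperm η ^ j) x) = (pperm η ^ (i + j)) x := by
  rw [← Equiv.Perm.mul_apply, ← zpow_add]

lemma pperm_apply_zpow (η : PM n) (i : ℤ) (x : Fin n × Bool) :
    pperm η ((pperm η ^ i) x) = (pperm η ^ (1 + i)) x := by
  rw [zpow_add, zpow_one, Equiv.Perm.mul_apply]

lemma no_reflection (η : PM n) (x : Fin n × Bool) (i : ℤ) :
    (pperm η ^ i) x ≠ (idPM n).1 x := by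
  intro h
  rcases Int.even_or_odd i with ⟨m, rfl⟩ | ⟨m, rfl⟩
  · apply (idPM n).2.2 ((pperm η ^ m) x)
    rw [iota_pperm_zpow_apply η m x, ← h, zpow_apply_add]
    congr 1
    ring
  · apply η.2.2 ((pperm η ^ (m + 1)) x)
    rw [eta_apply η, iota_pperm_zpow_apply η (m+1) x, ← h,
      zpow_apply_add, pperm_apply_zpow]
    congr 1
    ring

lemma pperm_zpow_eq_self_iff (η : PM n) (x : Fin n × Bool) (i : ℤ) :
    (pperm η ^ i) x = x ↔ ((Function.minimalPeriod ⇑(pperm η) x : ℤ)) ∣ i := by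
  have := MulAction.zpow_smul_eq_iff_minimalPeriod_dvd (a := pperm η) (b := x) (n := i)
  simpa [Equiv.Perm.smul_def] using this

lemma pperm_zpow_eq_zpow_iff (η : PM n) (x : Fin n × Bool) (i j : ℤ) :
    (pperm η ^ i) x = (pperm η ^ j) x
      ↔ ((Function.minimalPeriod ⇑(pperm η) x : ℤ)) ∣ i - j := by
  rw [← pperm_zpow_eq_self_iff η x (i - j)]
  constructor
  · intro h
    have := congrArg (⇑(pperm η ^ (-j))) h
    rw [zpow_apply_add, zpow_apply_add] at this
    rw [show -j + i = i - j by ring, show -j + j = (0:ℤ) by ring] at this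
    simpa using this
  · intro h
    have := congrArg (⇑(pperm η ^ j)) h
    rw [zpow_apply_add] at this
    rw [show j + (i - j) = i by ring] at this
    simpa using this

lemma minimalPeriod_pos (η : PM n) (x : Fin n × Bool) :
    0 < Function.minimalPeriod ⇑(pperm η) x := by
  apply Function.minimalPeriod_pos_iff_mem_periodicPts.mpr
  exact ⟨orderOf (pperm η), orderOf_pos _, by
    rw [Function.IsPeriodicPt, Function.IsFixedPt, Equiv.Perm.iterate_eq_pow,
      pow_orderOf_eq_one]
    rfl⟩

end Dyn

section Orb

variable {n : ℕ} (η : PM n)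

/-- Membership in the `matchGraph η (idPM n)`-component of `x`, described explicitly. -/
def InOrb (x y : Fin n × Bool) : Prop :=
  ∃ i : ℤ, y = (pperm η ^ i) x ∨ y = (idPM n).1 ((pperm η ^ i) x)

lemma inOrb_self (x : Fin n × Bool) : InOrb η x x :=
  ⟨0, Or.inl (by simp)⟩

lemma inOrb_iota (x : Fin n × Bool) : InOrb η x ((idPM n).1 x) :=
  ⟨0, Or.inr (by simp)⟩

lemma inOrb_eta (x : Fin n × Bool) : InOrb η x (η.1 x) := by
  refine ⟨-1, Or.inr ?_⟩
  rw [iota_pperm_zpow_apply, neg_neg, eta_apply η x, zpow_one]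

lemma inOrb_trans {x u y : Fin n × Bool} (h1 : InOrb η x u) (h2 : InOrb η u y) :
    InOrb η x y := by
  obtain ⟨i, hi | hi⟩ := h1 <;> obtain ⟨j, hj | hj⟩ := h2 <;> subst hi <;> subst hj
  · exact ⟨j + i, Or.inl (by rw [zpow_apply_add])⟩
  · exact ⟨j + i, Or.inr (by rw [zpow_apply_add])⟩
  · refine ⟨i - j, Or.inr ?_⟩
    rw [iota_pperm_zpow_apply η i x, zpow_apply_add, iota_pperm_zpow_apply η (i-j) x]
    congr 1
    ring
  · refine ⟨i - j, Or.inl ?_⟩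
    rw [iota_pperm_zpow_apply η i x, zpow_apply_add, iota_pperm_zpow_apply η (j + -i) ((idPM n).1 x),
      (idPM n).2.1 x]
    congr 1
    ring

lemma inOrb_symm {x y : Fin n × Bool} (h : InOrb η x y) : InOrb η y x := by
  obtain ⟨i, hi | hi⟩ := h <;> subst hi
  · exact ⟨-i, Or.inl (by rw [zpow_apply_add]; simp)⟩
  · refine ⟨i, Or.inr ?_⟩
    rw [iota_pperm_zpow_apply η i x, zpow_apply_add]
    simp [(idPM n).2.1 x]

lemma adj_iota (x : Fin n × Bool) :
    (matchGraph η (idPM n)).Adj x ((idPM n).1 x) :=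
  ⟨Ne.symm ((idPM n).2.2 x), Or.inr rfl⟩

lemma adj_eta (x : Fin n × Bool) :
    (matchGraph η (idPM n)).Adj x (η.1 x) :=
  ⟨Ne.symm (η.2.2 x), Or.inl rfl⟩

lemma reach_iota (x : Fin n × Bool) :
    (matchGraph η (idPM n)).Reachable x ((idPM n).1 x) :=
  (adj_iota η x).reachable

lemma reach_eta (x : Fin n × Bool) :
    (matchGraph η (idPM n)).Reachable x (η.1 x) :=
  (adj_eta η x).reachable

lemma mk_eq_iff_inOrb (x y : Fin n × Bool) :
    (matchGraph η (idPM n)).connectedComponentMk y = (matchGraph η (idPM n)).connectedComponentMk x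
      ↔ InOrb η x y := by
  constructor
  · intro h
    have hr : (matchGraph η (idPM n)).Reachable x y :=
      (SimpleGraph.ConnectedComponent.eq.mp h).symm
    obtain ⟨w⟩ := hr
    clear h
    induction w with
    | nil => exact inOrb_self η _
    | cons hadj w ih =>
      rename_i a b c
      apply inOrb_trans η _ ih
      rcases hadj.2 with h | h
      · rw [← h]; exact inOrb_eta η a
      · rw [← h]; exact inOrb_iota η a
  · intro h
    apply SimpleGraph.ConnectedComponent.eq.mpr
    apply SimpleGraph.Reachable.symm
    have reach_zpow : ∀ i : ℤ, (matchGraph η (idPM n)).Reachable x ((pperm η ^ i) x) := by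
      intro i
      induction i using Int.induction_on with
      | zero => simpa using SimpleGraph.Reachable.refl x
      | succ k ihk =>
        refine ihk.trans ((reach_iota η _).trans ?_)
        have : (pperm η ^ ((k:ℤ)+1)) x = η.1 ((idPM n).1 ((pperm η ^ (k:ℤ)) x)) := by
          rw [← pperm_apply, pperm_apply_zpow]
          congr 1; ring
        rw [this]
        exact reach_eta η _
      | pred k ihk =>
        refine ihk.trans ((reach_eta η _).trans ?_)
        have : (pperm η ^ (-(k:ℤ)-1)) x = (idPM n).1 (η.1 ((pperm η ^ (-(k:ℤ))) x)) := by
          rw [← pperm_inv_apply, ← zpow_neg_one, zpow_apply_add]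
          congr 1; ring
        rw [this]
        exact reach_iota η _
    obtain ⟨i, hi | hi⟩ := h <;> subst hi
    · exact reach_zpow i
    · exact (reach_zpow i).trans (reach_iota η _)

end Orb

section Chart

variable {n : ℕ} (η : PM n)

abbrev Comp (η : PM n) := (matchGraph η (idPM n)).ConnectedComponent

lemma mk_out (c : Comp η) :
    (matchGraph η (idPM n)).connectedComponentMk (Quot.out c) = c :=
  Quot.out_eq c

/-- Half-length of a component. -/
def ell (c : Comp η) : ℕ := Function.minimalPeriod ⇑(pperm η) (Quot.out c)

lemma ell_pos (c : Comp η) : 0 < ell η c := minimalPeriod_pos η _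

lemma zmod_zpow_eq (x : Fin n × Bool) (i j : ℤ)
    (h : (i : ZMod (Function.minimalPeriod ⇑(pperm η) x))
      = (j : ZMod (Function.minimalPeriod ⇑(pperm η) x))) :
    (pperm η ^ i) x = (pperm η ^ j) x := by
  rw [pperm_zpow_eq_zpow_iff]
  rw [← ZMod.intCast_zmod_eq_zero_iff_dvd]
  push_cast
  rw [h, sub_self]

/-- The parametrization of the component `c` by `ZMod (ell η c) × Bool`. -/
def wfun (c : Comp η) : ZMod (ell η c) × Bool → Fin n × Bool :=
  fun z => cond z.2 ((idPM n).1 ((pperm η ^ ((z.1.val : ℤ))) (Quot.out c)))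
    ((pperm η ^ ((z.1.val : ℤ))) (Quot.out c))

lemma wfun_mem (c : Comp η) (z : ZMod (ell η c) × Bool) :
    (matchGraph η (idPM n)).connectedComponentMk (wfun η c z) = c := by
  have : (matchGraph η (idPM n)).connectedComponentMk (wfun η c z)
      = (matchGraph η (idPM n)).connectedComponentMk (Quot.out c) := by
    apply (mk_eq_iff_inOrb η _ _).mpr
    obtain ⟨i, b⟩ := z
    cases b
    · exact ⟨(i.val : ℤ), Or.inl rfl⟩
    · exact ⟨(i.val : ℤ), Or.inr rfl⟩
  rw [this, mk_out]

lemma val_cast_eq (L : ℕ) [NeZero L] (i : ZMod L) : ((i.val : ℤ) : ZMod L) = i := by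
  push_cast
  simp [ZMod.natCast_val, ZMod.cast_id]

lemma wfun_inj (c : Comp η) : Function.Injective (wfun η c) := by
  haveI : NeZero (ell η c) := NeZero.of_pos (ell_pos η c)
  have noref : ∀ (a b : ℤ), (pperm η ^ a) (Quot.out c)
      ≠ (idPM n).1 ((pperm η ^ b) (Quot.out c)) := by
    intro a b h
    rw [iota_pperm_zpow_apply η b] at h
    have h2 := congrArg (⇑(pperm η ^ b)) h
    rw [zpow_apply_add, zpow_apply_add] at h2
    simp only [add_neg_cancel, zpow_zero, Equiv.Perm.coe_one, id_eq] at h2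
    exact no_reflection η (Quot.out c) (b + a) h2
  have valeq : ∀ (i j : ZMod (ell η c)),
      (pperm η ^ ((i.val : ℤ))) (Quot.out c) = (pperm η ^ ((j.val : ℤ))) (Quot.out c) → i = j := by
    intro i j h
    rw [pperm_zpow_eq_zpow_iff] at h
    have h2 : (((i.val : ℤ) - (j.val : ℤ) : ℤ) : ZMod (ell η c)) = 0 :=
      (ZMod.intCast_zmod_eq_zero_iff_dvd _ _).mpr h
    rw [Int.cast_sub, val_cast_eq, val_cast_eq, sub_eq_zero] at h2
    exact h2
  rintro ⟨i, bi⟩ ⟨j, bj⟩ h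
  cases bi <;> cases bj <;> simp only [wfun, cond] at h
  · rw [valeq i j h]
  · exact absurd h (noref _ _)
  · exact absurd h.symm (noref _ _)
  · rw [valeq i j ((idPM n).1.injective h)]

lemma wfun_surj (c : Comp η) (y : Fin n × Bool)
    (hy : (matchGraph η (idPM n)).connectedComponentMk y = c) :
    ∃ z, wfun η c z = y := by
  haveI : NeZero (ell η c) := NeZero.of_pos (ell_pos η c)
  have horb : InOrb η (Quot.out c) y := by
    apply (mk_eq_iff_inOrb η _ _).mp
    rw [hy, mk_out]
  obtain ⟨i, hi | hi⟩ := horb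
  · refine ⟨((i : ZMod (ell η c)), false), ?_⟩
    simp only [wfun, cond]
    rw [hi]
    exact zmod_zpow_eq η _ _ _ (by exact val_cast_eq _ _)
  · refine ⟨((i : ZMod (ell η c)), true), ?_⟩
    simp only [wfun, cond]
    rw [hi]
    congr 1
    exact zmod_zpow_eq η _ _ _ (by exact val_cast_eq _ _)

/-- The chart equivalence for a component. -/
def chart (c : Comp η) : (ZMod (ell η c) × Bool) ≃ c.supp :=
  Equiv.ofBijective (fun z => ⟨wfun η c z, wfun_mem η c z⟩)
    ⟨fun a b hab => wfun_inj η c (congrArg Subtype.val hab),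
     fun y => by
       obtain ⟨z, hz⟩ := wfun_surj η c y.1 y.2
       exact ⟨z, Subtype.ext hz⟩⟩

lemma chart_apply (c : Comp η) (z : ZMod (ell η c) × Bool) :
    (chart η c z : Fin n × Bool) = wfun η c z := rfl

lemma card_supp (c : Comp η) : Nat.card c.supp = 2 * ell η c := by
  haveI : NeZero (ell η c) := NeZero.of_pos (ell_pos η c)
  rw [← Nat.card_congr (chart η c), Nat.card_prod, Nat.card_zmod]
  simp [Nat.card_eq_fintype_card, mul_comm]

-- intertwining
lemma wfun_iota (c : Comp η) (i : ZMod (ell η c)) (b : Bool) :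
    (idPM n).1 (wfun η c (i, b)) = wfun η c (i, !b) := by
  cases b
  · rfl
  · exact (idPM n).2.1 _

lemma wfun_eta_true (c : Comp η) (i : ZMod (ell η c)) :
    η.1 (wfun η c (i, true)) = wfun η c (i + 1, false) := by
  haveI : NeZero (ell η c) := NeZero.of_pos (ell_pos η c)
  show η.1 ((idPM n).1 ((pperm η ^ ((i.val : ℤ))) (Quot.out c))) = _
  rw [← pperm_apply, pperm_apply_zpow]
  apply zmod_zpow_eq
  push_cast
  have hc : ∀ j : ZMod (ell η c),
      (ZMod.cast j : ZMod (Function.minimalPeriod ⇑(pperm η) (Quot.out c))) = j :=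
    ZMod.cast_id _
  simp only [ZMod.natCast_val, hc]
  ring_nf
  rfl

lemma wfun_eta_false (c : Comp η) (i : ZMod (ell η c)) :
    η.1 (wfun η c (i, false)) = wfun η c (i - 1, true) := by
  haveI : NeZero (ell η c) := NeZero.of_pos (ell_pos η c)
  apply (idPM n).1.injective
  show (idPM n).1 (η.1 ((pperm η ^ ((i.val : ℤ))) (Quot.out c)))
    = (idPM n).1 ((idPM n).1 ((pperm η ^ (((i - 1 : ZMod (ell η c)).val : ℤ))) (Quot.out c)))
  rw [(idPM n).2.1, ← pperm_inv_apply, ← zpow_neg_one, zpow_apply_add]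
  apply zmod_zpow_eq
  push_cast
  have hc : ∀ j : ZMod (ell η c),
      (ZMod.cast j : ZMod (Function.minimalPeriod ⇑(pperm η) (Quot.out c))) = j :=
    ZMod.cast_id _
  simp only [ZMod.natCast_val, hc]
  ring_nf
  rfl

end Chart

section Assemble

variable {n : ℕ}

lemma card_comp_eq (η η' : PM n) (h : cycleStruct η = cycleStruct η') (m : ℕ) :
    Nat.card {c : Comp η // Nat.card c.supp = m}
      = Nat.card {c' : Comp η' // Nat.card c'.supp = m} := by
  rcases Nat.even_or_odd m with ⟨r, hr⟩ | hodd
  · rw [show m = 2 * r by omega]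
    exact congrFun h r
  · have h1 : IsEmpty {c : Comp η // Nat.card c.supp = m} := by
      refine ⟨fun ⟨c, hc⟩ => ?_⟩
      rw [card_supp] at hc
      exact (Nat.not_odd_iff_even.mpr ⟨ell η c, by omega⟩) (hc ▸ hodd)
    have h2 : IsEmpty {c' : Comp η' // Nat.card c'.supp = m} := by
      refine ⟨fun ⟨c, hc⟩ => ?_⟩
      rw [card_supp] at hc
      exact (Nat.not_odd_iff_even.mpr ⟨ell η' c, by omega⟩) (hc ▸ hodd)
    rw [Nat.card_of_isEmpty, Nat.card_of_isEmpty]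

lemma zmod_cast_add_one {L1 L2 : ℕ} (h : L1 = L2) (i : ZMod L1) :
    Equiv.cast (congrArg ZMod h) (i + 1) = Equiv.cast (congrArg ZMod h) i + 1 := by
  subst h; simp

lemma zmod_cast_sub_one {L1 L2 : ℕ} (h : L1 = L2) (i : ZMod L1) :
    Equiv.cast (congrArg ZMod h) (i - 1) = Equiv.cast (congrArg ZMod h) i - 1 := by
  subst h; simp

theorem exists_conj (η η' : PM n) (h : cycleStruct η = cycleStruct η') :
    ∃ g : Equiv.Perm (Fin n × Bool),
      (∀ x, g ((idPM n).1 x) = (idPM n).1 (g x)) ∧ (∀ x, g (η.1 x) = η'.1 (g x)) := by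
  classical
  -- the size-preserving matching of components
  have hcard := card_comp_eq η η' h
  let φ : ∀ m, {c : Comp η // Nat.card c.supp = m} ≃ {c' : Comp η' // Nat.card c'.supp = m} :=
    fun m => (Finite.card_eq.mp (hcard m)).some
  let F : Comp η ≃ Comp η' :=
    (Equiv.sigmaFiberEquiv (fun c : Comp η => Nat.card c.supp)).symm.trans
      ((Equiv.sigmaCongrRight φ).trans
        (Equiv.sigmaFiberEquiv (fun c' : Comp η' => Nat.card c'.supp)))
  have hF : ∀ c, Nat.card (F c).supp = Nat.card c.supp :=
    fun c => (φ (Nat.card c.supp) ⟨c, rfl⟩).2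
  have hL : ∀ c, ell η c = ell η' (F c) := by
    intro c
    have h1 := hF c
    rw [card_supp, card_supp] at h1
    omega
  -- the global chart equivalences
  let E : (Fin n × Bool) ≃ Σ c : Comp η, ZMod (ell η c) × Bool :=
    (Equiv.sigmaFiberEquiv
      (fun x => (matchGraph η (idPM n)).connectedComponentMk x)).symm.trans
      (Equiv.sigmaCongrRight (fun c => (chart η c).symm))
  let E' : (Fin n × Bool) ≃ Σ c' : Comp η', ZMod (ell η' c') × Bool :=
    (Equiv.sigmaFiberEquiv
      (fun x => (matchGraph η' (idPM n)).connectedComponentMk x)).symm.trans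
      (Equiv.sigmaCongrRight (fun c' => (chart η' c').symm))
  let mid : (Σ c : Comp η, ZMod (ell η c) × Bool) ≃ Σ c' : Comp η', ZMod (ell η' c') × Bool :=
    Equiv.sigmaCongr F
      (fun c => Equiv.prodCongr (Equiv.cast (congrArg ZMod (hL c))) (Equiv.refl Bool))
  let g : Equiv.Perm (Fin n × Bool) := E.trans (mid.trans E'.symm)
  -- pointwise behaviour of E
  have hE' : ∀ (c : Comp η) (x : Fin n × Bool)
      (hx : (matchGraph η (idPM n)).connectedComponentMk x = c),
      E x = ⟨c, (chart η c).symm ⟨x, hx⟩⟩ := by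
    intro c x hx
    subst hx
    rfl
  have hE : ∀ (c : Comp η) (z : ZMod (ell η c) × Bool), E (wfun η c z) = ⟨c, z⟩ := by
    intro c z
    rw [hE' c (wfun η c z) (wfun_mem η c z)]
    congr 1
    rw [Equiv.symm_apply_eq]
    exact Subtype.ext rfl
  have hEsymm : ∀ (c' : Comp η') (y : ZMod (ell η' c') × Bool),
      E'.symm ⟨c', y⟩ = wfun η' c' y := by
    intro c' y
    rfl
  -- the key computation
  have gw : ∀ (c : Comp η) (z : ZMod (ell η c) × Bool),
      g (wfun η c z) = wfun η' (F c) (Equiv.cast (congrArg ZMod (hL c)) z.1, z.2) := by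
    intro c z
    show E'.symm (mid (E (wfun η c z))) = _
    rw [hE c z]
    have hmid : mid ⟨c, z⟩
        = ⟨F c, (Equiv.cast (congrArg ZMod (hL c)) z.1, z.2)⟩ := rfl
    rw [hmid, hEsymm]
  -- every point is in the range of some chart
  have hrep : ∀ x : Fin n × Bool, ∃ (c : Comp η) (z : ZMod (ell η c) × Bool),
      wfun η c z = x := by
    intro x
    obtain ⟨z, hz⟩ := wfun_surj η ((matchGraph η (idPM n)).connectedComponentMk x) x rfl
    exact ⟨_, z, hz⟩
  refine ⟨g, ?_, ?_⟩
  · intro x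
    obtain ⟨c, ⟨i, b⟩, rfl⟩ := hrep x
    rw [wfun_iota, gw, gw, ← wfun_iota]
  · intro x
    obtain ⟨c, ⟨i, b⟩, rfl⟩ := hrep x
    cases b
    · rw [wfun_eta_false, gw, gw]
      show wfun η' (F c) (Equiv.cast (congrArg ZMod (hL c)) (i - 1), true) = _
      rw [zmod_cast_sub_one (hL c), ← wfun_eta_false]
    · rw [wfun_eta_true, gw, gw]
      show wfun η' (F c) (Equiv.cast (congrArg ZMod (hL c)) (i + 1), false) = _
      rw [zmod_cast_add_one (hL c), ← wfun_eta_true]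

end Assemble

/-- the projection of the `k`-PM random walk onto its cycle structure
is total-variation preserving. -/
theorem tv_projection_cycleStruct (n k : ℕ) (h2 : 2 ≤ k) (hkn : k ≤ n) (t : ℕ) :
    TV (pmLaw n k (idPM n) t) (unifPM n)
      = TV (push cycleStruct (pmLaw n k (idPM n) t)) (push cycleStruct (unifPM n)) := by
  refine (TV_push_eq _ _ _ ?_).symm
  intro x y hxy
  have hlaw : pmLaw n k (idPM n) t x = pmLaw n k (idPM n) t y := by
    obtain ⟨g, hgι, hgη⟩ := exists_conj x y hxy
    have hconj : conjPM g x = y := by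
      apply Subtype.ext
      apply Equiv.ext
      intro z
      show g (x.1 (g⁻¹ z)) = y.1 z
      rw [hgη (g⁻¹ z), Equiv.Perm.apply_inv_self]
    calc pmLaw n k (idPM n) t x
        = pmLaw n k (conjPM g (idPM n)) t (conjPM g x) := by
          rw [pmLaw_conj g k (idPM n) t x]
    _ = pmLaw n k (idPM n) t y := by rw [conjPM_idPM g hgι, hconj]
  rw [hlaw, unifPM, unifPM]

end
end

section
/- For every η ∈ M_n, the matchings η and id_n lie in the same connected component of the swap graph on M_n, and the swap-graph distance satisfies d(η, id_n) = Σ_{ℓ≥2} (ℓ−1)·C_ℓ(η); equivalently, the minimal number of swaps needed to transform η into id_n equals n minus the number of connected components of the multigraph ({1,…,2n}, η ⊎ id_n). -/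
open scoped Classical

noncomputable section

namespace SwapAux

open Equiv Equiv.Perm

variable {X : Type*} [Fintype X] [DecidableEq X]

/-- Number of cycles (orbits) of a permutation. -/
def orbs (f : Equiv.Perm X) : ℕ := Nat.card (Quotient (SameCycle.setoid f))

lemma sameCycle_subrel {f : Equiv.Perm X} {r : X → X → Prop} (hr : Equivalence r)
    (hstep : ∀ x, r x (f x)) : ∀ {x y}, f.SameCycle x y → r x y := by
  have hpow : ∀ (n : ℕ) (x : X), r x ((f ^ n) x) := by
    intro n
    induction n with
    | zero => intro x; simpa using hr.refl x
    | succ n ih =>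
      intro x
      have h1 : (f ^ (n + 1)) x = (f ^ n) (f x) := by
        rw [pow_succ]; rfl
      rw [h1]
      exact hr.trans (hstep x) (ih (f x))
  intro x y h
  obtain ⟨i, _, hxy⟩ := h.exists_pow_eq'
  exact hxy ▸ hpow i x

lemma orbs_le_orbs_mul_swap_add_one (f : Equiv.Perm X) (u v : X) :
    orbs f ≤ orbs (f * Equiv.swap u v) + 1 := by
  by_cases huv : u = v
  · subst huv
    rw [Equiv.swap_self, ← Equiv.Perm.one_def, mul_one]
    exact Nat.le_succ _
  set g := f * Equiv.swap u v with hg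
  -- the merged relation
  set conn : X → Prop := fun x => f.SameCycle x u ∨ f.SameCycle x v with hconn
  set r : X → X → Prop := fun x y => f.SameCycle x y ∨ (conn x ∧ conn y) with hr
  have hrequiv : Equivalence r := by
    constructor
    · intro x; exact Or.inl (SameCycle.refl f x)
    · rintro x y (h | ⟨h1, h2⟩)
      · exact Or.inl h.symm
      · exact Or.inr ⟨h2, h1⟩
    · rintro x y z (h | ⟨h1, h2⟩) (h' | ⟨h1', h2'⟩)
      · exact Or.inl (h.trans h')
      · exact Or.inr ⟨h1'.imp h.trans h.trans, h2'⟩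
      · exact Or.inr ⟨h1, h2.imp (fun hh => h'.symm.trans hh) fun hh => h'.symm.trans hh⟩
      · exact Or.inr ⟨h1, h2'⟩
  set s : Setoid X := ⟨r, hrequiv⟩ with hs
  have hstep : ∀ x, r x (g x) := by
    intro x
    by_cases hx : x = u
    · refine Or.inr ⟨Or.inl (hx ▸ SameCycle.refl f x), Or.inr ?_⟩
      have hgu : g x = f v := by simp [hg, hx, Equiv.swap_apply_left]
      rw [hgu]
      exact ⟨-1, by simp⟩
    by_cases hx' : x = v
    · refine Or.inr ⟨Or.inr (hx' ▸ SameCycle.refl f x), Or.inl ?_⟩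
      have hgv : g x = f u := by simp [hg, hx', Equiv.swap_apply_right]
      rw [hgv]
      exact ⟨-1, by simp⟩
    · have : g x = f x := by simp [hg, Equiv.swap_apply_of_ne_of_ne hx hx']
      rw [this]
      exact Or.inl ⟨1, by simp⟩
  -- maps to quotient of s
  have hsub : ∀ {x y : X}, g.SameCycle x y → r x y := sameCycle_subrel hrequiv hstep
  let φ : Quotient (SameCycle.setoid g) → Quotient s :=
    Quotient.map' id fun a b h => hsub h
  have hφ : Function.Surjective φ := by
    intro q
    induction q using Quotient.inductionOn' with
    | h x => exact ⟨Quotient.mk'' x, rfl⟩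
  let ψ : Quotient (SameCycle.setoid f) → Quotient s :=
    Quotient.map' id fun a b h => Or.inl h
  have hψkey : ∀ q1 q2 : Quotient (SameCycle.setoid f), ψ q1 = ψ q2 →
      q1 ≠ Quotient.mk'' v → q2 ≠ Quotient.mk'' v → q1 = q2 := by
    intro q1 q2 h h1 h2
    induction q1 using Quotient.inductionOn' with
    | h x =>
    induction q2 using Quotient.inductionOn' with
    | h y =>
    have hxy : r x y := Quotient.exact' h
    rcases hxy with h' | ⟨hx, hy⟩
    · exact Quotient.sound' h'
    · have hxu : f.SameCycle x u := by
        rcases hx with h' | h'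
        · exact h'
        · exact absurd (Quotient.sound' h') h1
      have hyu : f.SameCycle y u := by
        rcases hy with h' | h'
        · exact h'
        · exact absurd (Quotient.sound' h') h2
      exact Quotient.sound' (hxu.trans hyu.symm)
  -- cardinalities
  have hc1 : Fintype.card (Quotient s) ≤ Fintype.card (Quotient (SameCycle.setoid g)) :=
    Fintype.card_le_of_surjective φ hφ
  have hc2 : Fintype.card (Quotient (SameCycle.setoid f)) - 1 ≤ Fintype.card (Quotient s) := by
    have := Finset.card_le_card_of_injOn (f := ψ)
      (s := Finset.univ.erase (Quotient.mk'' v)) (t := Finset.univ)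
      (fun a _ => Finset.mem_univ _) ?_
    · simpa [Finset.card_erase_of_mem] using this
    · intro a ha b hb hab
      simp only [Finset.coe_erase, Set.mem_diff, Set.mem_singleton_iff, Finset.mem_coe] at ha hb
      exact hψkey a b hab ha.2 hb.2
  simp only [orbs, Nat.card_eq_fintype_card]
  omega

lemma orbs_mul_swap_lt (f : Equiv.Perm X) {u v : X} (hu : f u = u) (huv : u ≠ v) :
    orbs (f * Equiv.swap u v) < orbs f := by
  set g := f * Equiv.swap u v with hg
  have hgu : g u = f v := by simp [hg, Equiv.swap_apply_left]
  have hgv : g v = u := by simp [hg, Equiv.swap_apply_right, hu]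
  have hvu : g.SameCycle v u := ⟨1, by simpa using hgv⟩
  have hstep : ∀ x, g.SameCycle x (f x) := by
    intro x
    by_cases hx : x = u
    · rw [hx, hu]
    by_cases hx' : x = v
    · rw [hx']
      have : f v = g u := hgu.symm
      rw [this]
      exact hvu.trans ⟨1, rfl⟩
    · have : f x = g x := by simp [hg, Equiv.swap_apply_of_ne_of_ne hx hx']
      rw [this]
      exact ⟨1, rfl⟩
  have hsub : ∀ {x y : X}, f.SameCycle x y → g.SameCycle x y :=
    sameCycle_subrel (SameCycle.equivalence g) hstep
  let χ : Quotient (SameCycle.setoid f) → Quotient (SameCycle.setoid g) :=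
    Quotient.map' id fun a b h => hsub h
  have hsurj : Function.Surjective χ := by
    intro q
    induction q using Quotient.inductionOn' with
    | h x => exact ⟨Quotient.mk'' x, rfl⟩
  have hninj : ¬Function.Injective χ := by
    intro hinj
    have h1 : χ (Quotient.mk'' u) = χ (Quotient.mk'' v) := Quotient.sound' hvu.symm
    have h2 := hinj h1
    have h3 : f.SameCycle u v := Quotient.exact' h2
    obtain ⟨i, hi⟩ := h3
    rw [Equiv.Perm.zpow_apply_eq_self_of_apply_eq_self hu] at hi
    exact huv hi
  have := Fintype.card_lt_of_surjective_not_injective χ hsurj hninj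
  simpa [orbs, Nat.card_eq_fintype_card] using this

section Dict

variable {n : ℕ}

/-- The permutation `x ↦ (x.1, !x.2)`. -/
def sig (n : ℕ) : Equiv.Perm (Fin n × Bool) := (idPM n).1

/-- The composition `η ∘ id`. -/
def piPerm (η : PM n) : Equiv.Perm (Fin n × Bool) := η.1 * (idPM n).1

/-- The number of connected components of `η ⊎ id`. -/
def Phi (η : PM n) : ℕ := Nat.card (matchGraph η (idPM n)).ConnectedComponent

lemma sig_sig (x : Fin n × Bool) : sig n (sig n x) = x := (idPM n).2.1 x

lemma sig_ne (x : Fin n × Bool) : sig n x ≠ x := (idPM n).2.2 x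

lemma piPerm_apply (η : PM n) (x : Fin n × Bool) : piPerm η x = η.1 (sig n x) := rfl

lemma sig_inv : (sig n)⁻¹ = sig n := by
  refine Equiv.ext fun x => ?_
  rw [Equiv.Perm.inv_eq_iff_eq]
  exact (sig_sig x).symm

lemma eta_apply (η : PM n) (x : Fin n × Bool) : η.1 x = piPerm η (sig n x) := by
  rw [piPerm_apply, sig_sig]

lemma sig_conj (η : PM n) (i : ℤ) (x : Fin n × Bool) :
    sig n ((piPerm η ^ i) x) = (piPerm η ^ (-i)) (sig n x) := by
  have hc : sig n * piPerm η * (sig n)⁻¹ = (piPerm η)⁻¹ := by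
    refine Equiv.ext fun y => ?_
    simp only [Equiv.Perm.mul_apply]
    rw [sig_inv]
    apply (piPerm η).injective
    rw [show ∀ z, piPerm η ((piPerm η)⁻¹ z) = z from fun z => (piPerm η).apply_symm_apply z, piPerm_apply, sig_sig, piPerm_apply, sig_sig]
    exact η.2.1 y
  have hz : sig n * (piPerm η ^ i) * (sig n)⁻¹ = piPerm η ^ (-i) := by
    rw [← conj_zpow, hc, inv_zpow']
  have h2 := DFunLike.congr_fun hz (sig n x)
  simp only [Equiv.Perm.mul_apply, sig_inv, sig_sig] at h2
  exact h2

lemma sc_sig (η : PM n) {a b : Fin n × Bool} (h : (piPerm η).SameCycle a b) :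
    (piPerm η).SameCycle (sig n a) (sig n b) := by
  obtain ⟨i, hi⟩ := h
  exact ⟨-i, by rw [← sig_conj, hi]⟩

lemma adj_sig (η : PM n) (x : Fin n × Bool) : (matchGraph η (idPM n)).Adj x (sig n x) :=
  ⟨(sig_ne x).symm, Or.inr rfl⟩

lemma adj_eta (η : PM n) (x : Fin n × Bool) : (matchGraph η (idPM n)).Adj x (η.1 x) :=
  ⟨(η.2.2 x).symm, Or.inl rfl⟩

lemma reach_pi (η : PM n) (x : Fin n × Bool) :
    (matchGraph η (idPM n)).Reachable x (piPerm η x) :=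
  (adj_sig η x).reachable.trans (by rw [piPerm_apply]; exact (adj_eta η (sig n x)).reachable)

lemma sc_to_reach (η : PM n) {x y : Fin n × Bool} (h : (piPerm η).SameCycle x y) :
    (matchGraph η (idPM n)).Reachable x y :=
  sameCycle_subrel ⟨SimpleGraph.Reachable.refl, SimpleGraph.Reachable.symm,
    SimpleGraph.Reachable.trans⟩ (reach_pi η) h

lemma adj_step (η : PM n) {x y : Fin n × Bool} (h : (matchGraph η (idPM n)).Adj x y) :
    (piPerm η).SameCycle x y ∨ (piPerm η).SameCycle x (sig n y) := by
  rcases h.2 with h2 | h2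
  · refine Or.inr ?_
    have hkey : (piPerm η)⁻¹ x = sig n (η.1 x) := by
      apply (piPerm η).injective
      rw [show ∀ z, piPerm η ((piPerm η)⁻¹ z) = z from fun z => (piPerm η).apply_symm_apply z, piPerm_apply, sig_sig]
      exact (η.2.1 x).symm
    rw [← h2]
    exact ⟨-1, by rw [zpow_neg_one]; exact hkey⟩
  · refine Or.inr ?_
    have h3 : sig n y = x := by
      have : sig n x = y := h2
      rw [← this, sig_sig]
    rw [h3]

lemma reach_to_sc (η : PM n) {x y : Fin n × Bool}
    (h : (matchGraph η (idPM n)).Reachable x y) :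
    (piPerm η).SameCycle x y ∨ (piPerm η).SameCycle x (sig n y) := by
  obtain ⟨w⟩ := h
  induction w with
  | nil => exact Or.inl (Equiv.Perm.SameCycle.refl _ _)
  | cons hadj p ih =>
    rcases adj_step η hadj with h1 | h1
    · rcases ih with h2 | h2
      · exact Or.inl (h1.trans h2)
      · exact Or.inr (h1.trans h2)
    · rcases ih with h2 | h2
      · exact Or.inr (h1.trans (sc_sig η h2))
      · refine Or.inl (h1.trans ?_)
        have h3 := sc_sig η h2
        rw [sig_sig] at h3
        exact h3

lemma not_sc_sig (η : PM n) (x : Fin n × Bool) : ¬ (piPerm η).SameCycle x (sig n x) := by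
  rintro ⟨k, hk⟩
  rcases Int.even_or_odd k with ⟨j, hj⟩ | ⟨j, hj⟩
  · apply sig_ne ((piPerm η ^ j) x)
    rw [sig_conj, ← hk, ← Equiv.Perm.mul_apply, ← zpow_add]
    have h1 : -j + k = j := by omega
    rw [h1]
  · apply η.2.2 ((piPerm η ^ (j + 1)) x)
    have h3 : (piPerm η ^ (-(j + 1))) ((piPerm η ^ k) x) = (piPerm η ^ j) x := by
      rw [← Equiv.Perm.mul_apply, ← zpow_add]
      have h1 : -(j + 1) + k = j := by omega
      rw [h1]
    have h4 : piPerm η ((piPerm η ^ j) x) = (piPerm η ^ (j + 1)) x := by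
      rw [← Equiv.Perm.mul_apply, ← zpow_one_add]
      have h2 : (1 : ℤ) + j = j + 1 := by omega
      rw [h2]
    rw [eta_apply, sig_conj, ← hk, h3, h4]

end Dict

section Card

variable {n : ℕ}

/-- Map from `π`-orbits to connected components. -/
def theta (η : PM n) : Quotient (Equiv.Perm.SameCycle.setoid (piPerm η)) →
    (matchGraph η (idPM n)).ConnectedComponent :=
  fun q => Quotient.liftOn' q (fun x => (matchGraph η (idPM n)).connectedComponentMk x)
    (fun _ _ h => SimpleGraph.ConnectedComponent.sound (sc_to_reach η h))

lemma theta_mk (η : PM n) (x : Fin n × Bool) :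
    theta η (Quotient.mk'' x) = (matchGraph η (idPM n)).connectedComponentMk x :=
  Quotient.liftOn'_mk'' _ _ x

lemma two_mul_phi (η : PM n) : 2 * Phi η = orbs (piPerm η) := by
  have hfib : ∀ c : (matchGraph η (idPM n)).ConnectedComponent,
      (Finset.univ.filter fun q => theta η q = c).card = 2 := by
    intro c
    induction c using SimpleGraph.ConnectedComponent.ind with
    | _ x =>
      have hset : (Finset.univ.filter fun q => theta η q =
            (matchGraph η (idPM n)).connectedComponentMk x)
          = {Quotient.mk'' x, Quotient.mk'' (sig n x)} := by
        ext q
        simp only [Finset.mem_filter, Finset.mem_univ, true_and, Finset.mem_insert,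
          Finset.mem_singleton]
        constructor
        · intro hq
          induction q using Quotient.inductionOn' with
          | h y =>
            rw [theta_mk] at hq
            have hr : (matchGraph η (idPM n)).Reachable y x :=
              (SimpleGraph.ConnectedComponent.eq).mp hq
            rcases reach_to_sc η hr with h | h
            · exact Or.inl (Quotient.sound' h)
            · exact Or.inr (Quotient.sound' h)
        · rintro (rfl | rfl)
          · rw [theta_mk]
          · rw [theta_mk]
            exact SimpleGraph.ConnectedComponent.sound (adj_sig η x).reachable.symm
      rw [hset, Finset.card_insert_of_notMem, Finset.card_singleton]
      intro hmem
      rw [Finset.mem_singleton] at hmem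
      exact not_sc_sig η x (Quotient.exact' hmem)
  have hcard := Finset.card_eq_sum_card_fiberwise
    (s := (Finset.univ : Finset (Quotient (Equiv.Perm.SameCycle.setoid (piPerm η)))))
    (t := (Finset.univ : Finset (matchGraph η (idPM n)).ConnectedComponent))
    (f := theta η) (fun x _ => Finset.mem_univ _)
  rw [Finset.card_univ] at hcard
  have : ∑ c ∈ (Finset.univ : Finset (matchGraph η (idPM n)).ConnectedComponent),
      (Finset.univ.filter fun q => theta η q = c).card = 2 * Phi η := by
    rw [Finset.sum_congr rfl fun c _ => hfib c, Finset.sum_const, Finset.card_univ, smul_eq_mul,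
      Phi, Nat.card_eq_fintype_card, mul_comm]
  rw [orbs, Nat.card_eq_fintype_card, hcard, this]

lemma card_V : Fintype.card (Fin n × Bool) = 2 * n := by
  rw [Fintype.card_prod, Fintype.card_fin, Fintype.card_bool, mul_comm]

lemma phi_le (η : PM n) : Phi η ≤ n := by
  have h1 := two_mul_phi η
  have h2 : orbs (piPerm η) ≤ Fintype.card (Fin n × Bool) := by
    rw [orbs, Nat.card_eq_fintype_card]
    exact Fintype.card_quotient_le _
  rw [card_V] at h2
  omega

lemma phi_idPM : Phi (idPM n) = n := by
  have hpi : piPerm (idPM n) = 1 := by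
    refine Equiv.ext fun x => ?_
    exact (idPM n).2.1 x
  have h2 : orbs (piPerm (idPM n)) = Fintype.card (Fin n × Bool) := by
    rw [hpi, orbs, Nat.card_eq_fintype_card]
    refine (Fintype.card_of_bijective (f := (Quotient.mk'' : _ →
      Quotient (Equiv.Perm.SameCycle.setoid (1 : Equiv.Perm (Fin n × Bool))))) ?_).symm
    constructor
    · intro a b h
      obtain ⟨i, hi⟩ := Quotient.exact' h
      simpa using hi
    · exact Quotient.mk''_surjective
  have h1 := two_mul_phi (idPM n)
  rw [h2, card_V] at h1
  omega

end Card

section Swap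

variable {n : ℕ}

lemma piPerm_decomp {η1 η2 : PM n} {p q r s : Fin n × Bool}
    (h : η2.1 = η1.1 * (Equiv.swap p q * Equiv.swap r s)) :
    piPerm η2 = piPerm η1 * Equiv.swap (sig n p) (sig n q) * Equiv.swap (sig n r) (sig n s) := by
  have e1 : (sig n)⁻¹ * Equiv.swap p q * sig n = Equiv.swap (sig n p) (sig n q) := by
    have h2 := Equiv.swap_apply_apply (sig n)⁻¹ p q
    rw [inv_inv] at h2
    rw [← h2, sig_inv]
  have e2 : (sig n)⁻¹ * Equiv.swap r s * sig n = Equiv.swap (sig n r) (sig n s) := by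
    have h2 := Equiv.swap_apply_apply (sig n)⁻¹ r s
    rw [inv_inv] at h2
    rw [← h2, sig_inv]
  rw [← e1, ← e2]
  show η2.1 * sig n = (η1.1 * sig n) * ((sig n)⁻¹ * Equiv.swap p q * sig n) *
    ((sig n)⁻¹ * Equiv.swap r s * sig n)
  rw [h]
  group

lemma phi_le_phi_add_one {η η' : PM n} (h : (swapGraph n).Adj η η') :
    Phi η ≤ Phi η' + 1 := by
  obtain ⟨hne, T, hT4, hηT, hη'T, hout⟩ := h
  have hex : ∃ a ∈ T, η.1 a ≠ η'.1 a := by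
    by_contra hcon
    push_neg at hcon
    apply hne
    apply Subtype.ext
    refine Equiv.ext fun x => ?_
    by_cases hx : x ∈ T
    · exact hcon x hx
    · exact hout x hx
  obtain ⟨a, haT, hane⟩ := hex
  set c := η.1 a with hc
  set d := η'.1 a with hd
  have hcT : c ∈ T := hηT a haT
  have hdT : d ∈ T := hη'T a haT
  have hac : a ≠ c := fun hh => η.2.2 a hh.symm
  have had : a ≠ d := fun hh => η'.2.2 a hh.symm
  have hcd : c ≠ d := hane
  have hcard3 : ({a, c, d} : Finset (Fin n × Bool)).card = 3 := by
    rw [Finset.card_insert_of_notMem (by simp [hac, had]),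
      Finset.card_insert_of_notMem (by simp [hcd]), Finset.card_singleton]
  have hw : ∃ w ∈ T, w ∉ ({a, c, d} : Finset (Fin n × Bool)) := by
    by_contra hcon
    push_neg at hcon
    have hTsub : T ⊆ ({a, c, d} : Finset (Fin n × Bool)) := fun x hx => hcon x hx
    have := Finset.card_le_card hTsub
    omega
  obtain ⟨w, hwT, hwm⟩ := hw
  simp only [Finset.mem_insert, Finset.mem_singleton, not_or] at hwm
  obtain ⟨hwa, hwc, hwd⟩ := hwm
  have hcard4 : ({a, c, d, w} : Finset (Fin n × Bool)).card = 4 := by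
    rw [Finset.card_insert_of_notMem (by simp [hac, had, Ne.symm hwa]),
      Finset.card_insert_of_notMem (by simp [hcd, Ne.symm hwc]),
      Finset.card_insert_of_notMem (by simp [Ne.symm hwd]), Finset.card_singleton]
  have hTeq : T = {a, c, d, w} := by
    refine (Finset.eq_of_subset_of_card_le ?_ (by omega)).symm
    intro x hx
    simp only [Finset.mem_insert, Finset.mem_singleton] at hx
    rcases hx with rfl | rfl | rfl | rfl <;> assumption
  have hmemT : ∀ x, x ∈ T ↔ x = a ∨ x = c ∨ x = d ∨ x = w := by
    intro x
    rw [hTeq]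
    simp
  have hηc : η.1 c = a := by rw [hc]; exact η.2.1 a
  have hη'd : η'.1 d = a := by rw [hd]; exact η'.2.1 a
  have hηw : η.1 w = d := by
    rcases (hmemT _).mp (hηT w hwT) with h1 | h1 | h1 | h1
    · exact absurd (η.1.injective (h1.trans hηc.symm)) hwc
    · exact absurd (η.1.injective (h1.trans hc)) hwa
    · exact h1
    · exact absurd h1 (η.2.2 w)
  have hη'w : η'.1 w = c := by
    rcases (hmemT _).mp (hη'T w hwT) with h1 | h1 | h1 | h1
    · exact absurd (η'.1.injective (h1.trans hη'd.symm)) hwd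
    · exact h1
    · exact absurd (η'.1.injective (h1.trans hd)) hwa
    · exact absurd h1 (η'.2.2 w)
  have hηd : η.1 d = w := by rw [← hηw]; exact η.2.1 w
  have hη'c : η'.1 c = w := by rw [← hη'w]; exact η'.2.1 w
  have hkey : η'.1 = η.1 * (Equiv.swap a w * Equiv.swap c d) := by
    refine Equiv.ext fun x => ?_
    simp only [Equiv.Perm.mul_apply]
    by_cases hxa : x = a
    · subst hxa
      rw [Equiv.swap_apply_of_ne_of_ne hac had, Equiv.swap_apply_left, hηw]
    by_cases hxw : x = w
    · subst hxw
      rw [Equiv.swap_apply_of_ne_of_ne hwc hwd, Equiv.swap_apply_right]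
      exact hη'w.trans hc
    by_cases hxc : x = c
    · subst hxc
      rw [Equiv.swap_apply_left, Equiv.swap_apply_of_ne_of_ne (Ne.symm had) (Ne.symm hwd), hη'c,
        hηd]
    by_cases hxd : x = d
    · subst hxd
      rw [Equiv.swap_apply_right, Equiv.swap_apply_of_ne_of_ne (Ne.symm hac) (Ne.symm hwc), hη'd,
        hηc]
    · have hxT : x ∉ T := by
        rw [hmemT]
        push_neg
        exact ⟨hxa, hxc, hxd, hxw⟩
      rw [Equiv.swap_apply_of_ne_of_ne hxc hxd, Equiv.swap_apply_of_ne_of_ne hxa hxw]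
      exact (hout x hxT).symm
  have hdec := piPerm_decomp (η1 := η) (η2 := η') hkey
  have h1 := orbs_le_orbs_mul_swap_add_one (piPerm η) (sig n a) (sig n w)
  have h2 := orbs_le_orbs_mul_swap_add_one (piPerm η * Equiv.swap (sig n a) (sig n w))
    (sig n c) (sig n d)
  rw [← hdec] at h2
  have e1 := two_mul_phi η
  have e2 := two_mul_phi η'
  omega

end Swap

section F3

variable {n : ℕ}

lemma exists_adj_phi_lt {η : PM n} (hne : η ≠ idPM n) :
    ∃ η' : PM n, (swapGraph n).Adj η η' ∧ Phi η + 1 ≤ Phi η' := by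
  have hex : ∃ a, η.1 a ≠ sig n a := by
    by_contra hcon
    push_neg at hcon
    exact hne (Subtype.ext (Equiv.ext fun x => hcon x))
  obtain ⟨a, ha⟩ := hex
  set b := sig n a with hb
  set c := η.1 a with hc
  set e := η.1 b with he
  set τ := Equiv.swap b c with hτ
  have hab : a ≠ b := (sig_ne a).symm
  have hac : a ≠ c := fun hh => η.2.2 a hh.symm
  have hbc : b ≠ c := fun hh => ha (hc ▸ hb ▸ hh.symm)
  have hbe : b ≠ e := fun hh => η.2.2 b hh.symm
  have hηe : η.1 e = b := by rw [he]; exact η.2.1 b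
  have hηc : η.1 c = a := by rw [hc]; exact η.2.1 a
  have hae : a ≠ e := by
    intro hh
    apply hbc
    rw [hc, hh, hηe]
  have hce : c ≠ e := by
    intro hh
    exact hab (η.1.injective (hc ▸ he ▸ hh))
  have hτa : τ a = a := Equiv.swap_apply_of_ne_of_ne hab hac
  have hτe : τ e = e := Equiv.swap_apply_of_ne_of_ne (Ne.symm hbe) (Ne.symm hce)
  have hτb : τ b = c := Equiv.swap_apply_left b c
  have hτc : τ c = b := Equiv.swap_apply_right b c
  have hττ : τ * τ = 1 := Equiv.swap_mul_self b c
  have hηη : η.1 * η.1 = 1 := by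
    refine Equiv.ext fun x => ?_
    exact η.2.1 x
  have hτ2 : ∀ g : Equiv.Perm (Fin n × Bool), τ * (τ * g) = g := fun g => by
    rw [← mul_assoc, hττ, one_mul]
  have hη2 : ∀ g : Equiv.Perm (Fin n × Bool), η.1 * (η.1 * g) = g := fun g => by
    rw [← mul_assoc, hηη, one_mul]
  have hsq : (τ * η.1 * τ) * (τ * η.1 * τ) = 1 := by
    simp only [mul_assoc]
    rw [hτ2, hη2, hττ]
  have hinv : Function.Involutive ⇑(τ * η.1 * τ) := by
    intro x
    have h2 := DFunLike.congr_fun hsq x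
    simpa [Equiv.Perm.mul_apply] using h2
  have hfpf : ∀ x, (τ * η.1 * τ) x ≠ x := by
    intro x hx
    simp only [Equiv.Perm.mul_apply] at hx
    have h2 := congrArg τ hx
    rw [Equiv.swap_apply_self] at h2
    exact η.2.2 (τ x) h2
  set η' : PM n := ⟨τ * η.1 * τ, hinv, hfpf⟩ with hη'
  have hη'a : η'.1 a = b := by
    show (τ * η.1 * τ) a = b
    simp only [Equiv.Perm.mul_apply]
    rw [hτa, ← hc, hτc]
  have hη'b : η'.1 b = a := by
    show (τ * η.1 * τ) b = a
    simp only [Equiv.Perm.mul_apply]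
    rw [hτb, hηc, hτa]
  have hη'c : η'.1 c = e := by
    show (τ * η.1 * τ) c = e
    simp only [Equiv.Perm.mul_apply]
    rw [hτc, ← he, hτe]
  have hη'e : η'.1 e = c := by
    show (τ * η.1 * τ) e = c
    simp only [Equiv.Perm.mul_apply]
    rw [hτe, hηe, hτb]
  have hη'out : ∀ x, x ≠ a → x ≠ b → x ≠ c → x ≠ e → η'.1 x = η.1 x := by
    intro x hxa hxb hxc hxe
    show (τ * η.1 * τ) x = η.1 x
    simp only [Equiv.Perm.mul_apply]
    rw [hτ, Equiv.swap_apply_of_ne_of_ne hxb hxc]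
    have h1 : η.1 x ≠ b := by
      intro hh
      apply hxe
      rw [← η.2.1 x, hh]
    have h2 : η.1 x ≠ c := by
      intro hh
      apply hxa
      rw [← η.2.1 x, hh]
      exact hηc
    rw [Equiv.swap_apply_of_ne_of_ne h1 h2]
  -- adjacency
  have hcard4 : ({a, b, c, e} : Finset (Fin n × Bool)).card = 4 := by
    rw [Finset.card_insert_of_notMem (by simp [hab, hac, hae]),
      Finset.card_insert_of_notMem (by simp [hbc, hbe]),
      Finset.card_insert_of_notMem (by simp [hce]), Finset.card_singleton]
  have hηT : ∀ x ∈ ({a, b, c, e} : Finset (Fin n × Bool)),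
      η.1 x ∈ ({a, b, c, e} : Finset (Fin n × Bool)) := by
    intro x hx
    simp only [Finset.mem_insert, Finset.mem_singleton] at hx ⊢
    rcases hx with rfl | rfl | rfl | rfl
    · right; right; left; exact hc.symm
    · right; right; right; exact he.symm
    · left; exact hηc
    · right; left; exact hηe
  have hη'T : ∀ x ∈ ({a, b, c, e} : Finset (Fin n × Bool)),
      η'.1 x ∈ ({a, b, c, e} : Finset (Fin n × Bool)) := by
    intro x hx
    simp only [Finset.mem_insert, Finset.mem_singleton] at hx ⊢
    rcases hx with rfl | rfl | rfl | rfl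
    · right; left; exact hη'a
    · left; exact hη'b
    · right; right; right; exact hη'c
    · right; right; left; exact hη'e
  have hout' : ∀ x ∉ ({a, b, c, e} : Finset (Fin n × Bool)), η.1 x = η'.1 x := by
    intro x hx
    simp only [Finset.mem_insert, Finset.mem_singleton, not_or] at hx
    exact (hη'out x hx.1 hx.2.1 hx.2.2.1 hx.2.2.2).symm
  have hnee : η ≠ η' := by
    intro hh
    apply hbc
    rw [← hη'a, ← hh]
  have hadj : (swapGraph n).Adj η η' :=
    ⟨hnee, {a, b, c, e}, hcard4, hηT, hη'T, hout'⟩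
  -- decomposition
  have hkey : η.1 = η'.1 * (Equiv.swap a e * Equiv.swap b c) := by
    refine Equiv.ext fun x => ?_
    show η.1 x = η'.1 (Equiv.swap a e (Equiv.swap b c x))
    by_cases hxa : x = a
    · subst hxa
      rw [Equiv.swap_apply_of_ne_of_ne hab hac, Equiv.swap_apply_left, hη'e]
    by_cases hxe : x = e
    · subst hxe
      rw [Equiv.swap_apply_of_ne_of_ne (Ne.symm hbe) (Ne.symm hce), Equiv.swap_apply_right, hη'a]
      exact hηe
    by_cases hxb : x = b
    · subst hxb
      rw [Equiv.swap_apply_left, Equiv.swap_apply_of_ne_of_ne (Ne.symm hac) hce, hη'c]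
    by_cases hxc : x = c
    · subst hxc
      rw [Equiv.swap_apply_right, Equiv.swap_apply_of_ne_of_ne (Ne.symm hab) hbe, hη'b]
      exact hηc
    · rw [Equiv.swap_apply_of_ne_of_ne hxb hxc, Equiv.swap_apply_of_ne_of_ne hxa hxe]
      exact (hη'out x hxa hxb hxc hxe).symm
  have hdec := piPerm_decomp (η1 := η') (η2 := η) hkey
  -- two merges
  have hσb : sig n b = a := by rw [hb, sig_sig]
  have hfix1 : (piPerm η') (sig n a) = sig n a := by
    rw [piPerm_apply, sig_sig, hη'a]
  have huv1 : sig n a ≠ sig n e := fun hh => hae ((sig n).injective hh)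
  have merge1 := orbs_mul_swap_lt (piPerm η') hfix1 huv1
  have hfix2 : (piPerm η' * Equiv.swap (sig n a) (sig n e)) (sig n b) = sig n b := by
    rw [hσb]
    have h1 : a ≠ sig n e := by
      intro hh
      apply hbe
      rw [hb, hh, sig_sig]
    show piPerm η' (Equiv.swap (sig n a) (sig n e) a) = a
    rw [Equiv.swap_apply_of_ne_of_ne (by rw [← hb]; exact hab) h1, piPerm_apply, ← hb, hη'b]
  have huv2 : sig n b ≠ sig n c := fun hh => hbc ((sig n).injective hh)
  have merge2 := orbs_mul_swap_lt (piPerm η' * Equiv.swap (sig n a) (sig n e)) hfix2 huv2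
  rw [← hdec] at merge2
  have e1 := two_mul_phi η
  have e2 := two_mul_phi η'
  exact ⟨η', hadj, by omega⟩

end F3

section Count

variable {n : ℕ}

lemma supp_card (η : PM n) (c : (matchGraph η (idPM n)).ConnectedComponent) :
    Nat.card c.supp = (Finset.univ.filter
      fun v => (matchGraph η (idPM n)).connectedComponentMk v = c).card := by
  rw [Nat.card_eq_fintype_card, ← Fintype.card_subtype]
  apply Fintype.card_congr
  apply Equiv.subtypeEquivRight
  intro v
  exact SimpleGraph.ConnectedComponent.mem_supp_iff c v

lemma F_spec (η : PM n) (c : (matchGraph η (idPM n)).ConnectedComponent) :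
    ∃ m, 1 ≤ m ∧ m ≤ n ∧ (Finset.univ.filter
      fun v => (matchGraph η (idPM n)).connectedComponentMk v = c).card = 2 * m := by
  set F := Finset.univ.filter
    fun v => (matchGraph η (idPM n)).connectedComponentMk v = c with hF
  have hclosed : ∀ v ∈ F, sig n v ∈ F := by
    intro v hv
    simp only [hF, Finset.mem_filter, Finset.mem_univ, true_and] at hv ⊢
    rw [← hv]
    exact (SimpleGraph.ConnectedComponent.sound (adj_sig η v).reachable).symm
  have hsplit := Finset.card_filter_add_card_filter_not (s := F)
    (p := fun v => v.2 = false)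
  have hbij : (F.filter fun v => v.2 = false).card
      = (F.filter fun v => ¬v.2 = false).card := by
    apply Finset.card_bij (fun v _ => sig n v)
    · intro v hv
      simp only [Finset.mem_filter] at hv ⊢
      refine ⟨hclosed v hv.1, ?_⟩
      have hsv : sig n v = (v.1, !v.2) := rfl
      rw [hsv, hv.2]
      simp
    · intro v1 _ v2 _ h
      exact (sig n).injective h
    · intro w hw
      simp only [Finset.mem_filter] at hw
      refine ⟨sig n w, Finset.mem_filter.mpr ⟨hclosed w hw.1, ?_⟩, sig_sig w⟩
      have hw2 : w.2 = true := by simpa using hw.2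
      have hsw : sig n w = (w.1, !w.2) := rfl
      rw [hsw, hw2]
      simp
  have hne : F.Nonempty := by
    obtain ⟨v, hv⟩ := c.exists_rep
    exact ⟨v, Finset.mem_filter.mpr ⟨Finset.mem_univ _, hv⟩⟩
  have hcle : F.card ≤ 2 * n := by
    have := Finset.card_le_univ F
    rwa [card_V] at this
  have hpos : 1 ≤ F.card := Finset.card_pos.mpr hne
  refine ⟨(F.filter fun v => v.2 = false).card, by omega, by omega, by omega⟩

lemma sum_formula (η : PM n) :
    ∑ ℓ ∈ Finset.Icc 2 n, (ℓ - 1) * cycleCount η (idPM n) ℓ = n - Phi η := by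
  choose m hm1 hmn hcard using fun c => F_spec η c
  have hC : ∀ ℓ, cycleCount η (idPM n) ℓ
      = (Finset.univ.filter fun c => m c = ℓ).card := by
    intro ℓ
    rw [cycleCount, Nat.card_eq_fintype_card, Fintype.card_subtype]
    congr 1
    apply Finset.filter_congr
    intro c _
    rw [supp_card η c, hcard c]
    omega
  have hmaps : ∀ c ∈ (Finset.univ : Finset (matchGraph η (idPM n)).ConnectedComponent),
      m c ∈ Finset.Icc 1 n := by
    intro c _
    rw [Finset.mem_Icc]
    exact ⟨hm1 c, hmn c⟩
  have hPhi : Phi η = ∑ ℓ ∈ Finset.Icc 1 n, (Finset.univ.filter fun c => m c = ℓ).card := by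
    rw [Phi, Nat.card_eq_fintype_card, ← Finset.card_univ]
    exact Finset.card_eq_sum_card_fiberwise hmaps
  have htot : ∑ c : (matchGraph η (idPM n)).ConnectedComponent,
      (Finset.univ.filter
        fun v => (matchGraph η (idPM n)).connectedComponentMk v = c).card = 2 * n := by
    have h2 := Finset.card_eq_sum_card_fiberwise
      (s := (Finset.univ : Finset (Fin n × Bool)))
      (t := (Finset.univ : Finset (matchGraph η (idPM n)).ConnectedComponent))
      (f := fun v => (matchGraph η (idPM n)).connectedComponentMk v)
      (fun x _ => Finset.mem_univ _)
    rw [Finset.card_univ, card_V] at h2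
    exact h2.symm
  have h2n : 2 * n = ∑ ℓ ∈ Finset.Icc 1 n,
      2 * ℓ * (Finset.univ.filter fun c => m c = ℓ).card := by
    rw [← htot, ← Finset.sum_fiberwise_of_maps_to hmaps]
    apply Finset.sum_congr rfl
    intro ℓ _
    calc ∑ c ∈ Finset.univ.filter fun c => m c = ℓ,
          (Finset.univ.filter
            fun v => (matchGraph η (idPM n)).connectedComponentMk v = c).card
        = ∑ _c ∈ Finset.univ.filter fun c => m c = ℓ, 2 * ℓ := by
          apply Finset.sum_congr rfl
          intro c hc
          rw [hcard c, (Finset.mem_filter.mp hc).2]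
      _ = 2 * ℓ * (Finset.univ.filter fun c => m c = ℓ).card := by
          rw [Finset.sum_const, smul_eq_mul, mul_comm]
  have hsum1 : ∑ ℓ ∈ Finset.Icc 1 n, ℓ * (Finset.univ.filter fun c => m c = ℓ).card = n := by
    have h3 : ∑ ℓ ∈ Finset.Icc 1 n, 2 * ℓ * (Finset.univ.filter fun c => m c = ℓ).card
        = 2 * ∑ ℓ ∈ Finset.Icc 1 n, ℓ * (Finset.univ.filter fun c => m c = ℓ).card := by
      rw [Finset.mul_sum]
      apply Finset.sum_congr rfl
      intro ℓ _
      ring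
    omega
  have hext : ∑ ℓ ∈ Finset.Icc 2 n, (ℓ - 1) * cycleCount η (idPM n) ℓ
      = ∑ ℓ ∈ Finset.Icc 1 n, (ℓ - 1) * (Finset.univ.filter fun c => m c = ℓ).card := by
    rw [Finset.sum_congr rfl fun ℓ _ => by rw [hC ℓ]]
    apply Finset.sum_subset (Finset.Icc_subset_Icc (by norm_num) le_rfl)
    intro x hx hnx
    rw [Finset.mem_Icc] at hx
    rw [Finset.mem_Icc] at hnx
    have : x = 1 := by omega
    rw [this]
    simp
  have hS2 : (∑ ℓ ∈ Finset.Icc 1 n, (ℓ - 1) * (Finset.univ.filter fun c => m c = ℓ).card)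
      + ∑ ℓ ∈ Finset.Icc 1 n, (Finset.univ.filter fun c => m c = ℓ).card
      = ∑ ℓ ∈ Finset.Icc 1 n, ℓ * (Finset.univ.filter fun c => m c = ℓ).card := by
    rw [← Finset.sum_add_distrib]
    apply Finset.sum_congr rfl
    intro ℓ hℓ
    rw [Finset.mem_Icc] at hℓ
    obtain ⟨t, ht⟩ := Nat.exists_eq_add_of_le hℓ.1
    subst ht
    have h4 : 1 + t - 1 = t := by omega
    rw [h4]
    ring
  omega

end Count

section Assemble

variable {n : ℕ}

lemma reach_and_dist_le : ∀ (k : ℕ) (η : PM n), n - Phi η ≤ k →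
    (swapGraph n).Reachable η (idPM n) ∧ (swapGraph n).dist η (idPM n) ≤ n - Phi η := by
  intro k
  induction k with
  | zero =>
    intro η hk
    by_cases hη : η = idPM n
    · subst hη
      exact ⟨SimpleGraph.Reachable.refl _, by rw [SimpleGraph.dist_self]; omega⟩
    · exfalso
      obtain ⟨η', _, hlt⟩ := exists_adj_phi_lt hη
      have h1 := phi_le η'
      have h2 := phi_le η
      omega
  | succ k ih =>
    intro η hk
    by_cases hη : η = idPM n
    · subst hη
      exact ⟨SimpleGraph.Reachable.refl _, by rw [SimpleGraph.dist_self]; omega⟩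
    obtain ⟨η', hadj, hlt⟩ := exists_adj_phi_lt hη
    have hle' := phi_le η'
    obtain ⟨hr', hd'⟩ := ih η' (by omega)
    refine ⟨hadj.reachable.trans hr', ?_⟩
    obtain ⟨p, hp⟩ := hr'.exists_walk_length_eq_dist
    have hwalk := SimpleGraph.dist_le (SimpleGraph.Walk.cons hadj p)
    rw [SimpleGraph.Walk.length_cons, hp] at hwalk
    omega

lemma phi_walk_bound : ∀ {μ ν : PM n} (q : (swapGraph n).Walk μ ν),
    Phi ν ≤ Phi μ + q.length := by
  intro μ ν q
  induction q with
  | nil => simp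
  | cons h p ih =>
    rw [SimpleGraph.Walk.length_cons]
    have h2 := phi_le_phi_add_one h.symm
    omega

end Assemble

end SwapAux

/-- every `η ∈ M_n` is connected to `id_n` in the swap graph, and the
swap distance is `d(η, id_n) = Σ_{ℓ≥2} (ℓ-1)·C_ℓ(η)`; equivalently, it equals `n`
minus the number of connected components of the multigraph `η ⊎ id_n`. -/
theorem swap_distance_eq (n : ℕ) (η : PM n) :
    (swapGraph n).Reachable η (idPM n) ∧
    (swapGraph n).dist η (idPM n)
      = ∑ ℓ ∈ Finset.Icc 2 n, (ℓ - 1) * cycleCount η (idPM n) ℓ ∧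
    (swapGraph n).dist η (idPM n)
      = n - Nat.card (matchGraph η (idPM n)).ConnectedComponent := by
  obtain ⟨hr, hle⟩ := SwapAux.reach_and_dist_le (n - SwapAux.Phi η) η le_rfl
  have hge : n ≤ SwapAux.Phi η + (swapGraph n).dist η (idPM n) := by
    obtain ⟨p, hp⟩ := hr.exists_walk_length_eq_dist
    have h2 := SwapAux.phi_walk_bound p
    rw [hp, SwapAux.phi_idPM] at h2
    exact h2
  have hphi := SwapAux.phi_le η
  have hdist : (swapGraph n).dist η (idPM n) = n - SwapAux.Phi η := by omega
  refine ⟨hr, ?_, ?_⟩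
  · rw [hdist]
    exact (SwapAux.sum_formula η).symm
  · exact hdist

end
end
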